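/- Let m ≥ 1 be a fixed odd integer, and for real σ > 1 let F(σ) = ∑_{q ≥ 1} (μ(q)²/(q^{2σ−2}·φ(q)²))·c_q(m). Then the limit of F(σ) as σ → 1⁺ exists and equals 0. -/

import Mathlib

open Finset Filter ArithmeticFunction
open scoped ArithmeticFunction.Moebius
open scoped ArithmeticFunction.zeta

/-- The Ramanujan sum `c_q(n) = ∑_{1 ≤ k ≤ q, gcd(k,q)=1} exp(2πikn/q)`. -/
noncomputable def ramanujanSum (q n : ℕ) : ℂ :=
  ∑ k ∈ (Finset.Icc 1 q).filter (fun k => Nat.gcd k q = 1),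
    Complex.exp (2 * (Real.pi : ℂ) * Complex.I * (k : ℂ) * (n : ℂ) / (q : ℂ))

lemma expsum_range (r n : ℕ) (hr : 0 < r) :
    ∑ j ∈ Finset.range r, Complex.exp (2 * (Real.pi : ℂ) * Complex.I * (j : ℂ) * (n : ℂ) / (r : ℂ))
      = if r ∣ n then (r : ℂ) else 0 := by
  have hr0 : (r : ℂ) ≠ 0 := Nat.cast_ne_zero.mpr hr.ne'
  set w : ℂ := Complex.exp (2 * (Real.pi : ℂ) * Complex.I * (n : ℂ) / (r : ℂ)) with hw
  have hterm : ∀ j : ℕ, Complex.exp (2 * (Real.pi : ℂ) * Complex.I * (j : ℂ) * (n : ℂ) / (r : ℂ)) = w ^ j := by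
    intro j
    rw [hw, ← Complex.exp_nat_mul]
    ring_nf
  simp only [hterm]
  have h2pi : (2 * (Real.pi:ℂ) * Complex.I) ≠ 0 := by
    simp [Complex.I_ne_zero, Real.pi_ne_zero, Complex.ofReal_ne_zero]
  by_cases h : r ∣ n
  · obtain ⟨c, rfl⟩ := h
    have hw1 : w = 1 := by
      rw [hw, Complex.exp_eq_one_iff]
      refine ⟨c, ?_⟩
      push_cast
      field_simp
    rw [if_pos (Dvd.intro c rfl)]
    simp [hw1]
  · rw [if_neg h]
    have hw1 : w ≠ 1 := by
      intro hone
      rw [hw, Complex.exp_eq_one_iff] at hone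
      obtain ⟨k, hk⟩ := hone
      apply h
      have hnk : (n : ℂ) = (k : ℂ) * r := by
        field_simp at hk
        have h2 : (n : ℂ) * (2 * (Real.pi:ℂ) * Complex.I) = ((k:ℂ) * r) * (2 * (Real.pi:ℂ) * Complex.I) := by
          rw [mul_comm ((n:ℂ)) _, hk]; ring
        exact mul_right_cancel₀ h2pi h2
      have hnkz : (n : ℤ) = k * r := by exact_mod_cast hnk
      have hk0 : 0 ≤ k := by
        by_contra hneg
        push_neg at hneg
        have : k * (r:ℤ) < 0 := mul_neg_of_neg_of_pos hneg (by exact_mod_cast hr)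
        omega
      lift k to ℕ using hk0
      exact ⟨k, by exact_mod_cast hnkz.trans (mul_comm _ _)⟩
    have hwr : w ^ r = 1 := by
      rw [hw, ← Complex.exp_nat_mul]
      rw [Complex.exp_eq_one_iff]
      refine ⟨n, ?_⟩
      field_simp
      norm_cast
    have := geom_sum_eq hw1 r
    rw [this, hwr]
    simp

lemma moebius_sum_divisors (n : ℕ) :
    ∑ d ∈ n.divisors, (μ d : ℤ) = if n = 1 then 1 else 0 := by
  have h : ((μ * ζ : ArithmeticFunction ℤ)) n = ∑ d ∈ n.divisors, (μ d : ℤ) :=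
    coe_mul_zeta_apply
  rw [moebius_mul_coe_zeta, one_apply] at h
  exact h.symm

lemma expsum_Icc (r n : ℕ) (hr : 0 < r) :
    ∑ j ∈ Finset.Icc 1 r, Complex.exp (2 * (Real.pi : ℂ) * Complex.I * (j : ℂ) * (n : ℂ) / (r : ℂ))
      = if r ∣ n then (r : ℂ) else 0 := by
  have hr0 : (r : ℂ) ≠ 0 := Nat.cast_ne_zero.mpr hr.ne'
  set f : ℕ → ℂ := fun j => Complex.exp (2 * (Real.pi : ℂ) * Complex.I * (j : ℂ) * (n : ℂ) / (r : ℂ)) with hf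
  have hfr : f r = 1 := by
    rw [hf]
    simp only
    rw [Complex.exp_eq_one_iff]
    exact ⟨n, by field_simp; norm_cast⟩
  have hf0 : f 0 = 1 := by simp [hf]
  have h1 : Finset.range (r+1) = insert 0 (Finset.Icc 1 r) := by
    ext x; simp; omega
  have h2 : ∑ j ∈ Finset.range (r+1), f j = f 0 + ∑ j ∈ Finset.Icc 1 r, f j := by
    rw [h1, Finset.sum_insert (by simp)]
  have h3 : ∑ j ∈ Finset.range (r+1), f j = ∑ j ∈ Finset.range r, f j + f r :=
    Finset.sum_range_succ f r
  have h4 : ∑ j ∈ Finset.Icc 1 r, f j = ∑ j ∈ Finset.range r, f j := by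
    rw [hfr] at h3; rw [hf0] at h2; linear_combination h3 - h2
  rw [h4]
  exact expsum_range r n hr

lemma ram_formula (q n : ℕ) (hq : 0 < q) :
    ramanujanSum q n = ∑ d ∈ q.divisors, (if d ∣ n then ((μ (q / d) : ℤ) : ℂ) * (d : ℂ) else 0) := by
  have hq0 : (q : ℂ) ≠ 0 := Nat.cast_ne_zero.mpr hq.ne'
  set t : ℕ → ℂ := fun k => Complex.exp (2 * (Real.pi : ℂ) * Complex.I * (k : ℂ) * (n : ℂ) / (q : ℂ)) with ht
  have step1 : ramanujanSum q n = ∑ k ∈ Finset.Icc 1 q,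
      (∑ e ∈ q.divisors.filter (· ∣ k), ((μ e : ℤ) : ℂ)) * t k := by
    rw [ramanujanSum, Finset.sum_filter]
    refine Finset.sum_congr rfl fun k hk => ?_
    have hk1 : 0 < k := by simp at hk; omega
    have hgcd : (Nat.gcd k q).divisors = q.divisors.filter (· ∣ k) := by
      ext e
      simp only [Nat.mem_divisors, Finset.mem_filter, Nat.dvd_gcd_iff]
      constructor
      · rintro ⟨⟨h1, h2⟩, -⟩; exact ⟨⟨h2, hq.ne'⟩, h1⟩
      · rintro ⟨⟨h2, -⟩, h1⟩; exact ⟨⟨h1, h2⟩, (Nat.gcd_ne_zero_left hk1.ne')⟩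
    rw [← hgcd]
    have := moebius_sum_divisors (Nat.gcd k q)
    have hcast : ∑ e ∈ (Nat.gcd k q).divisors, ((μ e : ℤ) : ℂ)
        = if Nat.gcd k q = 1 then 1 else 0 := by
      rcases eq_or_ne (Nat.gcd k q) 1 with h | h
      · rw [if_pos h]; rw [if_pos h] at this; exact_mod_cast this
      · rw [if_neg h]; rw [if_neg h] at this; exact_mod_cast this
    rw [hcast]
    split <;> simp [ht]
  rw [step1]
  simp_rw [Finset.sum_filter, Finset.sum_mul]
  rw [Finset.sum_comm]
  have step2 : ∀ e ∈ q.divisors,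
      ∑ k ∈ Finset.Icc 1 q, (if e ∣ k then ((μ e : ℤ) : ℂ) else 0) * t k
        = ((μ e : ℤ) : ℂ) * (if (q / e) ∣ n then ((q / e : ℕ) : ℂ) else 0) := by
    intro e he
    rw [Nat.mem_divisors] at he
    obtain ⟨⟨r, hqer⟩, -⟩ := he
    have he0 : 0 < e := Nat.pos_of_dvd_of_pos ⟨r, hqer⟩ hq
    have hr0 : 0 < r := by
      rcases Nat.eq_zero_or_pos r with h | h
      · subst h; simp at hqer; omega
      · exact h
    have hqe : q / e = r := by rw [hqer]; exact Nat.mul_div_cancel_left r he0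
    rw [hqe]
    have himg : (Finset.Icc 1 q).filter (fun k => e ∣ k) = (Finset.Icc 1 r).image (fun j => e * j) := by
      ext k
      simp only [Finset.mem_filter, Finset.mem_image, Finset.mem_Icc]
      constructor
      · rintro ⟨⟨hk1, hkq⟩, ⟨j, rfl⟩⟩
        refine ⟨j, ⟨Nat.pos_of_ne_zero ?_, by rw [hqer] at hkq; exact Nat.le_of_mul_le_mul_left hkq he0⟩, rfl⟩
        rintro rfl; simp at hk1
      · rintro ⟨j, ⟨hj1, hjr⟩, rfl⟩
        exact ⟨⟨Nat.mul_pos he0 hj1, by rw [hqer]; exact Nat.mul_le_mul_left e hjr⟩, ⟨j, rfl⟩⟩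
    have hsplit : ∑ k ∈ Finset.Icc 1 q, (if e ∣ k then ((μ e : ℤ) : ℂ) else 0) * t k
        = ((μ e : ℤ) : ℂ) * ∑ k ∈ (Finset.Icc 1 q).filter (fun k => e ∣ k), t k := by
      rw [Finset.mul_sum, Finset.sum_filter]
      refine Finset.sum_congr rfl fun k _ => ?_
      split <;> simp
    rw [hsplit, himg]
    have hinj : Set.InjOn (fun j => e * j) (Finset.Icc 1 r) := fun a _ b _ h => by
      exact Nat.eq_of_mul_eq_mul_left he0 h
    rw [Finset.sum_image hinj]
    have hterm : ∀ j, t (e * j)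
        = Complex.exp (2 * (Real.pi : ℂ) * Complex.I * (j : ℂ) * (n : ℂ) / (r : ℂ)) := by
      intro j
      rw [ht]
      simp only
      congr 1
      have hqc : (q : ℂ) = (e : ℂ) * (r : ℂ) := by rw [hqer]; push_cast; ring
      have he0' : (e : ℂ) ≠ 0 := Nat.cast_ne_zero.mpr he0.ne'
      have hr0' : (r : ℂ) ≠ 0 := Nat.cast_ne_zero.mpr hr0.ne'
      rw [hqc]
      push_cast
      field_simp
    simp_rw [hterm]
    rw [expsum_Icc r n hr0]
  rw [Finset.sum_congr rfl step2]
  have hfin := Nat.sum_div_divisors (α := ℂ) q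
      (fun d => if d ∣ n then ((μ (q / d) : ℤ) : ℂ) * (d : ℂ) else 0)
  rw [← hfin]
  refine Finset.sum_congr rfl fun e he => ?_
  rw [Nat.mem_divisors] at he
  have hee : q / (q / e) = e := Nat.div_div_self he.1 he.2
  simp only [hee]
  split <;> simp [mul_comm]

lemma ram_shift (q m : ℕ) (hq : 0 < q) (hqodd : Odd q) (hmodd : Odd m) :
    ramanujanSum (2 * q) m = - ramanujanSum q m := by
  rw [ram_formula q m hq, ram_formula (2 * q) m (by omega)]
  rw [← Finset.sum_filter, ← Finset.sum_filter, ← Finset.sum_neg_distrib]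
  have hset : (2 * q).divisors.filter (· ∣ m) = q.divisors.filter (· ∣ m) := by
    ext d
    simp only [Finset.mem_filter, Nat.mem_divisors]
    constructor
    · rintro ⟨⟨hd2q, -⟩, hdm⟩
      have hdodd : Odd d := hmodd.of_dvd_nat hdm  -- d ∣ m, m odd
      have hco : Nat.Coprime d 2 := Nat.coprime_two_right.mpr hdodd
      exact ⟨⟨(Nat.Coprime.dvd_of_dvd_mul_left hco hd2q), hq.ne'⟩, hdm⟩
    · rintro ⟨⟨hdq, -⟩, hdm⟩
      exact ⟨⟨hdq.mul_left 2, by omega⟩, hdm⟩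
  rw [hset]
  refine Finset.sum_congr rfl fun d hd => ?_
  simp only [Finset.mem_filter, Nat.mem_divisors] at hd
  obtain ⟨⟨hdq, -⟩, hdm⟩ := hd
  have hdiv : 2 * q / d = 2 * (q / d) := by
    rw [Nat.mul_div_assoc 2 hdq]
  have hqdodd : Odd (q / d) := by
    have hd0 : 0 < d := Nat.pos_of_dvd_of_pos hdq hq
    obtain ⟨c, hc⟩ := hdq
    have : q / d = c := by rw [hc]; exact Nat.mul_div_cancel_left c hd0
    rw [this]
    rcases Nat.even_or_odd c with h | h
    · exact absurd (hc ▸ h.mul_left d) (Nat.not_even_iff_odd.mpr hqodd)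
    · exact h
  have hmu : μ (2 * (q / d)) = - μ (q / d) := by
    have hco : Nat.Coprime 2 (q / d) := Nat.coprime_two_left.mpr hqdodd
    rw [isMultiplicative_moebius.map_mul_of_coprime hco]
    have : μ 2 = -1 := by
      rw [moebius_apply_prime Nat.prime_two]
    rw [this]; ring
  rw [hdiv, hmu]
  push_cast
  ring


lemma ram_bound (q m : ℕ) (hq : 0 < q) (hm : 0 < m) :
    ‖ramanujanSum q m‖ ≤ (m : ℝ) * m := by
  rw [ram_formula q m hq, ← Finset.sum_filter]
  calc ‖∑ d ∈ (q.divisors.filter (· ∣ m)), ((μ (q / d) : ℤ) : ℂ) * (d : ℂ)‖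
      ≤ ∑ d ∈ (q.divisors.filter (· ∣ m)), ‖((μ (q / d) : ℤ) : ℂ) * (d : ℂ)‖ :=
        norm_sum_le _ _
    _ ≤ ∑ d ∈ (q.divisors.filter (· ∣ m)), (m : ℝ) := by
        refine Finset.sum_le_sum fun d hd => ?_
        simp only [Finset.mem_filter, Nat.mem_divisors] at hd
        have hdm : (d : ℝ) ≤ m := Nat.cast_le.mpr (Nat.le_of_dvd hm hd.2)
        rw [norm_mul]
        have h1 : ‖((μ (q / d) : ℤ) : ℂ)‖ ≤ 1 := by
          rw [Complex.norm_intCast]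
          exact_mod_cast (abs_moebius_le_one (n := q / d))
        have h2 : ‖((d : ℕ) : ℂ)‖ = (d : ℝ) := by
          rw [Complex.norm_natCast]
        rw [h2]
        calc ‖((μ (q / d) : ℤ) : ℂ)‖ * (d : ℝ) ≤ 1 * (d : ℝ) :=
              mul_le_mul_of_nonneg_right h1 (Nat.cast_nonneg d)
          _ = (d : ℝ) := one_mul _
          _ ≤ (m : ℝ) := hdm
    _ ≤ (m : ℝ) * m := by
        rw [Finset.sum_const, nsmul_eq_mul]
        have hcard : ((q.divisors.filter (· ∣ m)).card : ℝ) ≤ m := by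
          have hsub : q.divisors.filter (· ∣ m) ⊆ Finset.Icc 1 m := by
            intro d hd
            simp only [Finset.mem_filter, Nat.mem_divisors] at hd
            rw [Finset.mem_Icc]
            exact ⟨Nat.pos_of_dvd_of_pos hd.2 hm, Nat.le_of_dvd hm hd.2⟩
          calc ((q.divisors.filter (· ∣ m)).card : ℝ)
              ≤ ((Finset.Icc 1 m).card : ℝ) := Nat.cast_le.mpr (Finset.card_le_card hsub)
            _ = m := by rw [Nat.card_Icc]; simp
        exact mul_le_mul_of_nonneg_right hcard (Nat.cast_nonneg m)

lemma prime_pow_bound {p : ℕ} (hp : p.Prime) (hodd : Odd p) : p ^ 3 ≤ (p - 1) ^ 5 := by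
  have h3 : 3 ≤ p := by
    have h2 := hp.two_le
    rcases eq_or_ne p 2 with rfl | h
    · exact absurd hodd (by decide)
    · omega
  obtain ⟨t, ht⟩ : ∃ t, p = t + 1 := ⟨p - 1, by omega⟩
  subst ht
  have h2 : 2 ≤ t := by omega
  simp only [Nat.add_sub_cancel]
  rcases eq_or_ne t 2 with rfl | ht3
  · norm_num
  · have h3t : 3 ≤ t := by omega
    calc (t + 1) ^ 3 ≤ (2 * t) ^ 3 := Nat.pow_le_pow_left (by omega) 3
      _ = 8 * t ^ 3 := by ring
      _ ≤ t ^ 2 * t ^ 3 := Nat.mul_le_mul_right _ (by nlinarith)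
      _ = t ^ 5 := by ring

lemma phi_pow_odd : ∀ q : ℕ, Squarefree q → Odd q → q ^ 3 ≤ Nat.totient q ^ 5 := by
  intro q
  induction q using Nat.strong_induction_on with
  | _ q ih =>
    intro hsq hodd
    rcases eq_or_ne q 1 with rfl | hq1
    · simp
    have hq0 : 0 < q := hsq.ne_zero.bot_lt
    have hq2 : 2 ≤ q := by omega
    set p := q.minFac with hp
    have hpp : p.Prime := Nat.minFac_prime hq1
    have hpd : p ∣ q := Nat.minFac_dvd q
    obtain ⟨r, hr⟩ := hpd
    have hp0 : 0 < p := hpp.pos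
    have hr0 : 0 < r := by
      rcases Nat.eq_zero_or_pos r with h | h
      · subst h; simp at hr; omega
      · exact h
    have hpodd : Odd p := by
      rcases hpp.eq_two_or_odd' with h | h
      · exfalso; rw [h] at hr; exact (Nat.not_even_iff_odd.mpr hodd) ⟨r, by omega⟩
      · exact h
    have hpr : Nat.Coprime p r := by
      rw [Nat.Prime.coprime_iff_not_dvd hpp]
      intro hdvd
      have : p * p ∣ q := by rw [hr]; exact mul_dvd_mul_left p hdvd
      exact hpp.one_lt.ne' (Nat.isUnit_iff.mp (hsq p this))
    have hrodd : Odd r := by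
      rcases Nat.even_or_odd r with h | h
      · exfalso; exact (Nat.not_even_iff_odd.mpr hodd) (by rw [hr]; exact h.mul_left p)
      · exact h
    have hrsq : Squarefree r := hsq.squarefree_of_dvd ⟨p, by rw [hr]; ring⟩
    have hrlt : r < q := by
      rw [hr]; nlinarith [hpp.two_le]
    have ihr := ih r hrlt hrsq hrodd
    have htot : Nat.totient q = (p - 1) * Nat.totient r := by
      rw [hr, Nat.totient_mul hpr, Nat.totient_prime hpp]
    rw [htot, hr]
    calc (p * r) ^ 3 = p ^ 3 * r ^ 3 := by ring
      _ ≤ (p - 1) ^ 5 * Nat.totient r ^ 5 := Nat.mul_le_mul (prime_pow_bound hpp hpodd) ihr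
      _ = ((p - 1) * Nat.totient r) ^ 5 := by ring

lemma phi_pow_sq (q : ℕ) (hsq : Squarefree q) : q ^ 3 ≤ 8 * Nat.totient q ^ 5 := by
  rcases Nat.even_or_odd q with h | h
  · obtain ⟨r, hr⟩ := h
    have hq0 : 0 < q := hsq.ne_zero.bot_lt
    have hr' : q = 2 * r := by omega
    have hr0 : 0 < r := by omega
    have hrodd : Odd r := by
      rcases Nat.even_or_odd r with h2 | h2
      · exfalso
        obtain ⟨s, hs⟩ := h2
        have : 2 * 2 ∣ q := ⟨s, by omega⟩
        exact (by norm_num : ¬ IsUnit 2) (hsq 2 this)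
      · exact h2
    have hco : Nat.Coprime 2 r := Nat.coprime_two_left.mpr hrodd
    have hrsq : Squarefree r := hsq.squarefree_of_dvd ⟨2, by omega⟩
    have htot : Nat.totient q = Nat.totient r := by
      rw [hr', Nat.totient_mul hco, Nat.totient_two, one_mul]
    rw [htot, hr']
    calc (2 * r) ^ 3 = 8 * r ^ 3 := by ring
      _ ≤ 8 * Nat.totient r ^ 5 := by
          exact Nat.mul_le_mul_left 8 (phi_pow_odd r hrsq hrodd)
  · calc q ^ 3 ≤ Nat.totient q ^ 5 := phi_pow_odd q hsq h
      _ ≤ 8 * Nat.totient q ^ 5 := by omega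

-- real bound: for squarefree q, q^(6/5) ≤ 8 * (φ q)^2
lemma phi_rpow_bound (q : ℕ) (hsq : Squarefree q) :
    (q : ℝ) ^ ((6 : ℝ)/5) ≤ 8 * (Nat.totient q : ℝ) ^ 2 := by
  have hq0 : (0:ℝ) ≤ (q:ℝ) := Nat.cast_nonneg q
  have hphi0 : (0:ℝ) ≤ (Nat.totient q : ℝ) := Nat.cast_nonneg _
  have h1 : ((q:ℝ) ^ (3:ℕ)) ≤ 8 * (Nat.totient q : ℝ) ^ (5:ℕ) := by
    exact_mod_cast phi_pow_sq q hsq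
  have h2 : (q : ℝ) ^ ((6 : ℝ)/5) = ((q:ℝ) ^ (3:ℕ)) ^ ((2:ℝ)/5) := by
    rw [← Real.rpow_natCast (q:ℝ) 3, ← Real.rpow_mul hq0]
    norm_num
  rw [h2]
  calc ((q:ℝ) ^ (3:ℕ)) ^ ((2:ℝ)/5)
      ≤ (8 * (Nat.totient q : ℝ) ^ (5:ℕ)) ^ ((2:ℝ)/5) := by
        apply Real.rpow_le_rpow (by positivity) h1 (by norm_num)
    _ = (8:ℝ) ^ ((2:ℝ)/5) * ((Nat.totient q : ℝ) ^ (5:ℕ)) ^ ((2:ℝ)/5) := by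
        rw [Real.mul_rpow (by norm_num) (by positivity)]
    _ ≤ 8 * (Nat.totient q : ℝ) ^ 2 := by
        have ha : (8:ℝ) ^ ((2:ℝ)/5) ≤ 8 := by
          calc (8:ℝ) ^ ((2:ℝ)/5) ≤ (8:ℝ) ^ (1:ℝ) :=
                Real.rpow_le_rpow_of_exponent_le (by norm_num) (by norm_num)
            _ = 8 := Real.rpow_one 8
        have hb : ((Nat.totient q : ℝ) ^ (5:ℕ)) ^ ((2:ℝ)/5) = (Nat.totient q : ℝ) ^ 2 := by
          rw [← Real.rpow_natCast (Nat.totient q : ℝ) 5, ← Real.rpow_mul hphi0,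
            show ((5:ℕ):ℝ) * (2/5) = ((2:ℕ):ℝ) by norm_num, Real.rpow_natCast]
        rw [hb]
        exact mul_le_mul_of_nonneg_right ha (by positivity)

set_option maxHeartbeats 2000000 in
theorem stmt_18 (m : ℕ) (hm : 1 ≤ m) (hodd : Odd m) :
    Filter.Tendsto
      (fun sigma : ℝ =>
        ∑' q : ℕ,
          (((μ q : ℤ) : ℂ) ^ 2 /
              (((q : ℝ) ^ (2 * sigma - 2) : ℝ) * (Nat.totient q : ℂ) ^ 2)) *
            ramanujanSum q m)
      (nhdsWithin 1 (Set.Ioi 1)) (nhds 0) := by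
  set F : ℝ → ℕ → ℂ := fun sigma q =>
    (((μ q : ℤ) : ℂ) ^ 2 /
        (((q : ℝ) ^ (2 * sigma - 2) : ℝ) * (Nat.totient q : ℂ) ^ 2)) *
      ramanujanSum q m with hF
  set g : ℕ → ℝ := fun q => 8 * ((m:ℝ) * m) * (1 / (q : ℝ) ^ ((6:ℝ)/5)) with hg
  have hg_nonneg : ∀ q, 0 ≤ g q := fun q => by positivity
  have hg_sum : Summable g := by
    apply Summable.mul_left
    exact Real.summable_one_div_nat_rpow.mpr (by norm_num)
  have hF0 : ∀ sigma : ℝ, F sigma 0 = 0 := by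
    intro sigma
    simp [hF]
  have hbound : ∀ sigma : ℝ, 1 ≤ sigma → ∀ q, ‖F sigma q‖ ≤ g q := by
    intro sigma hs q
    rcases Nat.eq_zero_or_pos q with rfl | hq
    · rw [hF0]; simpa using hg_nonneg 0
    by_cases hsq : Squarefree q
    case neg =>
      have : μ q = 0 := moebius_eq_zero_of_not_squarefree hsq
      simp only [hF, this]
      simpa using hg_nonneg q
    case pos =>
      have hphi : 0 < Nat.totient q := Nat.totient_pos.mpr hq
      have hmu : ((μ q : ℤ) : ℂ) ^ 2 = 1 := by
        have h := moebius_sq_eq_one_of_squarefree hsq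
        calc ((μ q : ℤ) : ℂ) ^ 2 = ((μ q ^ 2 : ℤ) : ℂ) := by push_cast; ring
          _ = 1 := by rw [h]; norm_num
      have hA1 : (1:ℝ) ≤ (q : ℝ) ^ (2 * sigma - 2) := by
        calc (1:ℝ) = (q:ℝ) ^ (0:ℝ) := (Real.rpow_zero _).symm
          _ ≤ (q:ℝ) ^ (2 * sigma - 2) := by
              apply Real.rpow_le_rpow_of_exponent_le
              · exact_mod_cast hq
              · linarith
      have hA0 : (0:ℝ) < (q : ℝ) ^ (2 * sigma - 2) := lt_of_lt_of_le one_pos hA1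
      have hnorm : ‖F sigma q‖
          = ‖ramanujanSum q m‖ / ((q : ℝ) ^ (2 * sigma - 2) * (Nat.totient q : ℝ) ^ 2) := by
        rw [hF]
        simp only
        rw [hmu, norm_mul, norm_div, norm_one, norm_mul, norm_pow,
          Complex.norm_natCast, Complex.norm_real, Real.norm_eq_abs, abs_of_pos hA0,
          one_div, inv_mul_eq_div]
      rw [hnorm]
      have hden : (0:ℝ) < (q : ℝ) ^ (2 * sigma - 2) * (Nat.totient q : ℝ) ^ 2 := by positivity
      rw [div_le_iff₀ hden, hg]
      simp only
      have hq65 : (0:ℝ) < (q : ℝ) ^ ((6:ℝ)/5) := by positivity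
      rw [one_div, ← div_eq_mul_inv]  -- g q = 8*(m*m) / q^(6/5)
      have hphi2 : (q : ℝ) ^ ((6:ℝ)/5) ≤ 8 * (Nat.totient q : ℝ) ^ 2 := phi_rpow_bound q hsq
      calc ‖ramanujanSum q m‖ ≤ (m:ℝ) * m := ram_bound q m hq hm
        _ = ((m:ℝ) * m) * 1 := (mul_one _).symm
        _ ≤ ((m:ℝ) * m) * ((q : ℝ) ^ (2 * sigma - 2) * (8 * (Nat.totient q : ℝ) ^ 2) / (q : ℝ) ^ ((6:ℝ)/5)) := by
            apply mul_le_mul_of_nonneg_left _ (by positivity)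
            rw [le_div_iff₀ hq65, one_mul]
            calc (q : ℝ) ^ ((6:ℝ)/5) ≤ 8 * (Nat.totient q : ℝ) ^ 2 := hphi2
              _ = 1 * (8 * (Nat.totient q : ℝ) ^ 2) := (one_mul _).symm
              _ ≤ (q : ℝ) ^ (2 * sigma - 2) * (8 * (Nat.totient q : ℝ) ^ 2) :=
                  mul_le_mul_of_nonneg_right hA1 (by positivity)
        _ = 8 * ((m:ℝ) * m) / (q : ℝ) ^ ((6:ℝ)/5) * ((q : ℝ) ^ (2 * sigma - 2) * (Nat.totient q : ℝ) ^ 2) := by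
            field_simp
  have hdouble : ∀ sigma : ℝ, ∀ q : ℕ,
      (if Odd (2 * q) then (0:ℂ) else F sigma (2 * q))
        = -(((2:ℝ) ^ (2 - 2 * sigma) : ℝ) : ℂ) * (if Odd q then F sigma q else 0) := by
    intro sigma q
    have hnotodd : ¬ Odd (2 * q) := by
      rw [Nat.not_odd_iff_even]; exact even_two_mul q
    rw [if_neg hnotodd]
    rcases Nat.even_or_odd q with heven | hoddq
    · rw [if_neg (Nat.not_odd_iff_even.mpr heven)]
      rcases Nat.eq_zero_or_pos q with rfl | hq
      · rw [mul_zero, hF0]; ring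
      · obtain ⟨s, hs⟩ := heven
        have hnsq : ¬ Squarefree (2 * q) := by
          intro h
          have h4 : 2 * 2 ∣ 2 * q := ⟨s, by omega⟩
          exact (by norm_num : ¬ IsUnit (2:ℕ)) (h 2 h4)
        have : μ (2 * q) = 0 := moebius_eq_zero_of_not_squarefree hnsq
        simp only [hF, this]
        push_cast
        ring
    · rw [if_pos hoddq]
      have hq : 0 < q := hoddq.pos
      have hmu2 : μ (2 * q) = - μ q := by
        have hco : Nat.Coprime 2 q := Nat.coprime_two_left.mpr hoddq
        rw [isMultiplicative_moebius.map_mul_of_coprime hco,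
          moebius_apply_prime Nat.prime_two]
        ring
      have hphi2 : Nat.totient (2 * q) = Nat.totient q := by
        rw [Nat.totient_mul (Nat.coprime_two_left.mpr hoddq), Nat.totient_two, one_mul]
      have hram2 : ramanujanSum (2 * q) m = - ramanujanSum q m :=
        ram_shift q m hq hoddq hodd
      have hrpow : (((2 * q : ℕ) : ℝ)) ^ (2 * sigma - 2)
          = (2:ℝ) ^ (2 * sigma - 2) * ((q:ℝ)) ^ (2 * sigma - 2) := by
        push_cast
        exact Real.mul_rpow (by norm_num) (Nat.cast_nonneg q)
      have hinv : (((2:ℝ) ^ (2 - 2 * sigma) : ℝ) : ℂ)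
          = ((((2:ℝ) ^ (2 * sigma - 2) : ℝ))⁻¹ : ℂ) := by
        rw [show (2 - 2 * sigma) = -(2 * sigma - 2) by ring, Real.rpow_neg (by norm_num)]
        push_cast
        ring
      simp only [hF, hmu2, hphi2, hram2, hrpow, hinv]
      have hA0 : ((q:ℝ)) ^ (2 * sigma - 2) ≠ 0 := by
        have : (0:ℝ) < ((q:ℝ)) ^ (2 * sigma - 2) :=
          Real.rpow_pos_of_pos (by exact_mod_cast hq) _
        exact this.ne'
      have hB0 : ((2:ℝ)) ^ (2 * sigma - 2) ≠ 0 := by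
        have : (0:ℝ) < ((2:ℝ)) ^ (2 * sigma - 2) := Real.rpow_pos_of_pos (by norm_num) _
        exact this.ne'
      have hP0 : ((Nat.totient q : ℂ)) ≠ 0 := by
        exact_mod_cast (Nat.totient_pos.mpr hq).ne'
      have hA0' : (((q:ℝ) ^ (2 * sigma - 2) : ℝ) : ℂ) ≠ 0 := by
        exact_mod_cast hA0
      have hB0' : (((2:ℝ) ^ (2 * sigma - 2) : ℝ) : ℂ) ≠ 0 := by
        exact_mod_cast hB0
      push_cast
      ring
  have key : ∀ sigma : ℝ, 1 < sigma →
      (∑' q, F sigma q)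
        = (1 - (((2:ℝ) ^ (2 - 2 * sigma) : ℝ) : ℂ)) *
            ∑' q, (if Odd q then F sigma q else 0) := by
    intro sigma hs
    have hb := hbound sigma hs.le
    have hsum : Summable (F sigma) := Summable.of_norm_bounded hg_sum hb
    have hbO : ∀ q, ‖(if Odd q then F sigma q else 0)‖ ≤ g q := fun q => by
      split
      · exact hb q
      · simpa using hg_nonneg q
    have hsumO : Summable (fun q => if Odd q then F sigma q else 0) :=
      Summable.of_norm_bounded hg_sum hbO
    have hsumE : Summable (fun q => if Odd q then (0:ℂ) else F sigma q) := by
      have heq : (fun q => if Odd q then (0:ℂ) else F sigma q)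
          = F sigma - fun q => if Odd q then F sigma q else 0 := by
        funext q
        simp only [Pi.sub_apply]
        split <;> ring
      rw [heq]
      exact hsum.sub hsumO
    have hsplit : ∑' q, F sigma q
        = (∑' q, (if Odd q then F sigma q else 0))
          + ∑' q, (if Odd q then (0:ℂ) else F sigma q) := by
      rw [← Summable.tsum_add hsumO hsumE]
      congr 1
      funext q
      split <;> ring
    have hinj : Function.Injective (fun q : ℕ => 2 * q) := fun a b h =>
      Nat.eq_of_mul_eq_mul_left two_pos h
    have hcover : ∀ x, x ∉ Set.range (fun q : ℕ => 2 * q) →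
        (if Odd x then (0:ℂ) else F sigma x) = 0 := by
      intro x hx
      have hoddx : Odd x := by
        rcases Nat.even_or_odd x with h | h
        · obtain ⟨c, hc⟩ := h
          exact absurd ⟨c, show 2 * c = x by omega⟩ hx
        · exact h
      rw [if_pos hoddx]
    have hEven : ∑' q, (if Odd q then (0:ℂ) else F sigma q)
        = ∑' q, (if Odd (2 * q) then (0:ℂ) else F sigma (2 * q)) :=
      (hinj.tsum_eq (Function.support_subset_iff'.mpr hcover)).symm
    rw [hsplit, hEven]
    have : ∑' q, (if Odd (2 * q) then (0:ℂ) else F sigma (2 * q))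
        = -(((2:ℝ) ^ (2 - 2 * sigma) : ℝ) : ℂ)
            * ∑' q, (if Odd q then F sigma q else 0) := by
      rw [← tsum_mul_left]
      congr 1
      funext q
      exact hdouble sigma q
    rw [this]
    ring
  have hC : Filter.Tendsto
      (fun sigma : ℝ => |1 - (2:ℝ) ^ (2 - 2 * sigma)| * ∑' q, g q)
      (nhdsWithin 1 (Set.Ioi 1)) (nhds 0) := by
    have hcont : Continuous fun sigma : ℝ => (2:ℝ) ^ (2 - 2 * sigma) := by
      have heq : (fun sigma : ℝ => (2:ℝ) ^ (2 - 2 * sigma))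
          = fun sigma : ℝ => Real.exp (Real.log 2 * (2 - 2 * sigma)) := by
        funext s
        exact Real.rpow_def_of_pos (by norm_num) _
      rw [heq]
      exact Real.continuous_exp.comp (by continuity)
    have h2 : Continuous fun sigma : ℝ => |1 - (2:ℝ) ^ (2 - 2 * sigma)| * ∑' q, g q :=
      ((continuous_const.sub hcont).abs).mul continuous_const
    have h3 := h2.tendsto 1
    have h4 : |1 - (2:ℝ) ^ (2 - 2 * (1:ℝ))| = 0 := by
      rw [show (2:ℝ) - 2 * 1 = 0 by norm_num, Real.rpow_zero]
      simp
    have h5 : |1 - (2:ℝ) ^ (2 - 2 * (1:ℝ))| * ∑' q, g q = 0 := by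
      rw [h4, zero_mul]
    rw [h5] at h3
    exact h3.mono_left nhdsWithin_le_nhds
  apply squeeze_zero_norm' _ hC
  filter_upwards [self_mem_nhdsWithin] with sigma hsig
  have hs : (1:ℝ) < sigma := hsig
  rw [key sigma hs, norm_mul]
  have hb := hbound sigma hs.le
  have hbO : ∀ q, ‖(if Odd q then F sigma q else 0)‖ ≤ g q := fun q => by
    split
    · exact hb q
    · simpa using hg_nonneg q
  have hsumO : Summable (fun q => if Odd q then F sigma q else 0) :=
    Summable.of_norm_bounded hg_sum hbO
  have hsumnorm : Summable (fun q => ‖(if Odd q then F sigma q else 0)‖) :=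
    Summable.of_nonneg_of_le (fun q => norm_nonneg _) hbO hg_sum
  have hO : ‖∑' q, (if Odd q then F sigma q else 0)‖ ≤ ∑' q, g q := by
    calc ‖∑' q, (if Odd q then F sigma q else 0)‖
        ≤ ∑' q, ‖(if Odd q then F sigma q else 0)‖ := norm_tsum_le_tsum_norm hsumnorm
      _ ≤ ∑' q, g q := Summable.tsum_le_tsum hbO hsumnorm hg_sum
  have hcoef : ‖(1 : ℂ) - (((2:ℝ) ^ (2 - 2 * sigma) : ℝ) : ℂ)‖
      = |1 - (2:ℝ) ^ (2 - 2 * sigma)| := by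
    rw [show (1 : ℂ) - (((2:ℝ) ^ (2 - 2 * sigma) : ℝ) : ℂ)
        = (((1 - (2:ℝ) ^ (2 - 2 * sigma) : ℝ)) : ℂ) by push_cast; ring]
    rw [Complex.norm_real, Real.norm_eq_abs]
  rw [hcoef]
  exact mul_le_mul_of_nonneg_left hO (abs_nonneg _)
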